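/- Let P, P̂, P̄ be transition kernels on S×A with, for every (x,a), the support of P(·|x,a) contained in the supports of both P̂(·|x,a) and P̄(·|x,a); let r : S×A → ℝ, γ ∈ [0,1), and φ₁,…,φ_d : S → ℝ. Assume: (i) for every (x,a) and every i, ∑_y P̄(y|x,a)·φᵢ(y) = ∑_y P(y|x,a)·φᵢ(y); (ii) for every (x,a), KL(P(·|x,a)‖P̄(·|x,a)) ≤ KL(P(·|x,a)‖P̂(·|x,a)). Set ε := max_{(x,a)} √(KL(P(·|x,a)‖P̂(·|x,a))) and c₁ := γ√2/(1−γ), and assume c₁·ε < 1. Let π* be an optimal deterministic policy for (r,P) and π̄* an optimal deterministic policy for (r,P̄). Then for every w ∈ ℝ^d, ‖V^{π*}(r,P) − V^{π̄*}(r,P)‖∞ ≤ (2c₁ε/(1 − c₁ε)) · ‖V^{π*}(r,P) − ∑_{i=1}^d wᵢφᵢ‖∞. -/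

import Mathlib

/-!
Pinsker's inequality, in the form `(∑ |p - q|)² ≤ 2 KL(p‖q)` obtained from Cauchy–Schwarz and
the pointwise bound `3 (t - 1)² ≤ 2 (t + 2) (t log t - t + 1)`, bounds every row of `P - P̄` in
`ℓ¹` by `√2 ε`. Since `P̄` reproduces the feature expectations of `P`, `P - P̄` annihilates
`g = ∑ wᵢ φᵢ`, and subtracting the two Bellman equations of a policy `μ` gives the simulation
bound `‖V_P^μ - V_P̄^μ‖ ≤ c₁ ε ‖V_P^μ - g‖`. Applied to `π*` and `π̄*`, together with the
optimality of each policy in its own model, it traps `V^{π*} - V^{π̄*}` between `0` and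
`c₁ ε (‖V^{π*} - g‖ + ‖V^{π̄*} - g‖)`; the triangle inequality for `‖V^{π̄*} - g‖` closes the
estimate.
-/

open Finset Matrix

/-- Supremum norm of a vector indexed by a finite type. -/
noncomputable def supNorm {S : Type*} [Fintype S] (v : S → ℝ) : ℝ := ⨆ x, |v x|

/-- KL divergence of finitely supported probability vectors,
with the convention `0 * log 0 = 0` (automatic since `Real.log 0 = 0`). -/
noncomputable def KLfin {S : Type*} [Fintype S] (p q : S → ℝ) : ℝ :=
  ∑ y, p y * Real.log (p y / q y)

/-- The row-stochastic matrix `P^μ` induced by a deterministic policy `μ`. -/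
noncomputable def polMat {S A : Type*} (P : S → A → S → ℝ) (μ : S → A) : Matrix S S ℝ :=
  Matrix.of fun x y => P x (μ x) y

/-- The value function `V^μ(r,P) = (I - γ P^μ)⁻¹ r^μ` of a deterministic policy `μ`. -/
noncomputable def polVal {S A : Type*} [Fintype S] [DecidableEq S]
    (γ : ℝ) (r : S → A → ℝ) (P : S → A → S → ℝ) (μ : S → A) : S → ℝ :=
  ((1 : Matrix S S ℝ) - γ • polMat P μ)⁻¹.mulVec (fun x => r x (μ x))

open Set Real InformationTheory

lemma monotoneOn_add_one_mul_log_sub :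
    MonotoneOn (fun t : ℝ => (t + 1) * log t - 2 * (t - 1)) (Ioi 0) := by
  have hderiv : ∀ t ∈ Ioi (0 : ℝ), HasDerivAt (fun t : ℝ => (t + 1) * log t - 2 * (t - 1))
      (log t + t⁻¹ - 1) t := by
    intro t ht
    have h := (((hasDerivAt_id t).add_const 1).mul (hasDerivAt_log (ne_of_gt ht))).sub
      (((hasDerivAt_id t).sub_const 1).const_mul 2)
    refine h.congr_deriv ?_
    have ht0 : t ≠ 0 := ne_of_gt ht
    simp only [id]
    field_simp
    ring
  refine monotoneOn_of_hasDerivWithinAt_nonneg (convex_Ioi 0) (f' := fun t => log t + t⁻¹ - 1)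
    (fun t ht => (hderiv t ht).continuousAt.continuousWithinAt) ?_ ?_ <;> rw [interior_Ioi]
  · exact fun t ht => (hderiv t ht).hasDerivWithinAt
  · exact fun t ht => by linarith [one_sub_inv_le_log_of_pos ht]

lemma three_mul_sq_sub_one_le_mul_klFun {t : ℝ} (ht : 0 ≤ t) :
    3 * (t - 1) ^ 2 ≤ 2 * (t + 2) * klFun t := by
  set H : ℝ → ℝ := fun t => 2 * (t + 2) * klFun t - 3 * (t - 1) ^ 2
  set K : ℝ → ℝ := fun t : ℝ => (t + 1) * log t - 2 * (t - 1)
  have hderiv : ∀ t ∈ Ioi (0 : ℝ), HasDerivAt H (4 * K t) t := by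
    intro t ht
    have h := ((((hasDerivAt_id t).add_const 2).const_mul 2).mul
      (hasDerivAt_klFun (ne_of_gt ht))).sub (((hasDerivAt_id t).sub_const 1).pow 2 |>.const_mul 3)
    refine h.congr_deriv ?_
    simp only [K, id, klFun_apply]
    ring
  have hcont : ContinuousOn H (Ici 0) := by
    simp only [H]
    fun_prop
  have hK1 : K 1 = 0 := by simp [K]
  have hH1 : H 1 = 0 := by simp [H, klFun_one]
  suffices 0 ≤ H t by linarith
  rcases le_total t 1 with h | h
  · have hanti : AntitoneOn H (Icc 0 1) := by
      refine antitoneOn_of_hasDerivWithinAt_nonpos (convex_Icc 0 1) (f' := fun s => 4 * K s)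
        (hcont.mono Icc_subset_Ici_self) ?_ ?_ <;> rw [interior_Icc]
      · exact fun s hs => (hderiv s hs.1).hasDerivWithinAt
      · intro s hs
        have := monotoneOn_add_one_mul_log_sub hs.1 (mem_Ioi.2 one_pos) hs.2.le
        linarith
    simpa [hH1] using hanti ⟨ht, h⟩ ⟨zero_le_one, le_rfl⟩ h
  · have hmono : MonotoneOn H (Ici 1) := by
      refine monotoneOn_of_hasDerivWithinAt_nonneg (convex_Ici 1) (f' := fun s => 4 * K s)
        (hcont.mono (Ici_subset_Ici.2 zero_le_one)) ?_ ?_ <;> rw [interior_Ici]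
      · exact fun s hs => (hderiv s (mem_Ioi.2 (zero_lt_one.trans hs))).hasDerivWithinAt
      · intro s hs
        have := monotoneOn_add_one_mul_log_sub (mem_Ioi.2 one_pos)
          (mem_Ioi.2 (zero_lt_one.trans hs)) hs.le
        linarith
    simpa [hH1] using hmono self_mem_Ici h h

lemma mul_log_div_sub_add_eq_mul_klFun {p q : ℝ} (hqp : q = 0 → p = 0) :
    p * log (p / q) - p + q = q * klFun (p / q) := by
  rcases eq_or_ne q 0 with hq | hq
  · simp [hq, hqp hq]
  · rw [klFun_apply]
    field_simp
    ring

lemma three_mul_sq_sub_le_mul_klFun {p q : ℝ} (hp : 0 ≤ p) (hq : 0 ≤ q) (hqp : q = 0 → p = 0) :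
    3 * (p - q) ^ 2 ≤ 2 * (p + 2 * q) * (q * klFun (p / q)) := by
  rcases hq.eq_or_lt with hq0 | hq0
  · simp [← hq0, hqp hq0.symm]
  · have h := mul_le_mul_of_nonneg_left (three_mul_sq_sub_one_le_mul_klFun (div_nonneg hp hq))
      (sq_nonneg q)
    have hpq : p = q * (p / q) := by field_simp
    calc 3 * (p - q) ^ 2 = q ^ 2 * (3 * (p / q - 1) ^ 2) := by
          nth_rw 1 [hpq]; ring
      _ ≤ q ^ 2 * (2 * (p / q + 2) * klFun (p / q)) := h
      _ = 2 * (p + 2 * q) * (q * klFun (p / q)) := by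
          nth_rw 3 [hpq]; ring

lemma KLfin_eq_sum_mul_klFun {S : Type*} [Fintype S] {p q : S → ℝ}
    (hp1 : ∑ y, p y = 1) (hq1 : ∑ y, q y = 1) (hqp : ∀ y, q y = 0 → p y = 0) :
    KLfin p q = ∑ y, q y * klFun (p y / q y) := by
  simp only [← mul_log_div_sub_add_eq_mul_klFun (hqp _), sum_add_distrib,
    sum_sub_distrib, hp1, hq1, KLfin]
  ring

theorem sum_abs_sub_le_sqrt_two_mul_KLfin {S : Type*} [Fintype S] {p q : S → ℝ}
    (hp0 : ∀ y, 0 ≤ p y) (hq0 : ∀ y, 0 ≤ q y) (hp1 : ∑ y, p y = 1) (hq1 : ∑ y, q y = 1)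
    (hqp : ∀ y, q y = 0 → p y = 0) :
    ∑ y, |p y - q y| ≤ √(2 * KLfin p q) := by
  refine le_sqrt_of_sq_le ?_
  have hCS := sum_sq_le_sum_mul_sum_of_sq_le_mul univ
    (r := fun y => |p y - q y|) (f := fun y => 2 / 3 * (p y + 2 * q y))
    (g := fun y => q y * klFun (p y / q y))
    (fun y _ => by have := hp0 y; have := hq0 y; positivity)
    (fun y _ => mul_nonneg (hq0 y) (klFun_nonneg (div_nonneg (hp0 y) (hq0 y))))
    (fun y _ => by
      rw [sq_abs]
      linarith [three_mul_sq_sub_le_mul_klFun (hp0 y) (hq0 y) (hqp y)])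
  have hf : ∑ y, 2 / 3 * (p y + 2 * q y) = 2 := by
    rw [← mul_sum, sum_add_distrib, ← mul_sum, hp1, hq1]
    norm_num
  rwa [hf, ← KLfin_eq_sum_mul_klFun hp1 hq1 hqp] at hCS

lemma supNorm_eq_norm {S : Type*} [Fintype S] (v : S → ℝ) : supNorm v = ‖v‖ :=
  le_antisymm (Real.iSup_le (fun x => norm_le_pi_norm v x) (norm_nonneg v))
    ((pi_norm_le_iff_of_nonneg (Real.iSup_nonneg fun x => abs_nonneg (v x))).2
      fun x => le_ciSup (f := fun x => |v x|) (Set.finite_range _).bddAbove x)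

lemma norm_mulVec_le {S : Type*} [Fintype S] {N : Matrix S S ℝ} {c : ℝ} (hc : 0 ≤ c)
    (hN : ∀ x, ∑ y, |N x y| ≤ c) (v : S → ℝ) : ‖N *ᵥ v‖ ≤ c * ‖v‖ := by
  refine (pi_norm_le_iff_of_nonneg (by positivity)).2 fun x => ?_
  calc ‖(N *ᵥ v) x‖ = |∑ y, N x y * v y| := rfl
    _ ≤ ∑ y, |N x y| * ‖v‖ := by
        refine (abs_sum_le_sum_abs _ _).trans (sum_le_sum fun y _ => ?_)
        rw [abs_mul]
        exact mul_le_mul_of_nonneg_left (norm_le_pi_norm v y) (abs_nonneg _)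
    _ ≤ c * ‖v‖ := by rw [← sum_mul]; exact mul_le_mul_of_nonneg_right (hN x) (norm_nonneg v)

lemma norm_mulVec_le_of_mem_rowStochastic {S : Type*} [Fintype S] [DecidableEq S]
    {M : Matrix S S ℝ} (hM : M ∈ rowStochastic ℝ S) (v : S → ℝ) : ‖M *ᵥ v‖ ≤ ‖v‖ := by
  have hrow : ∀ x, ∑ y, |M x y| ≤ 1 := fun x => by
    simp_rw [abs_of_nonneg (nonneg_of_mem_rowStochastic hM), sum_row_of_mem_rowStochastic hM x]
    rfl
  simpa using norm_mulVec_le zero_le_one hrow v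

lemma isUnit_det_one_sub_smul_of_mem_rowStochastic {S : Type*} [Fintype S] [DecidableEq S]
    {M : Matrix S S ℝ} (hM : M ∈ rowStochastic ℝ S) {γ : ℝ} (hγ0 : 0 ≤ γ) (hγ1 : γ < 1) :
    IsUnit (1 - γ • M).det := by
  refine isUnit_iff_ne_zero.2 (det_ne_zero_of_sum_row_lt_diag fun x => ?_)
  have hoff : ∀ y ∈ univ.erase x, ‖(1 - γ • M) x y‖ = γ * M x y := fun y hy => by
    simp [one_apply_ne' (ne_of_mem_erase hy), abs_of_nonneg hγ0,
      abs_of_nonneg (nonneg_of_mem_rowStochastic hM)]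
  have hMxx : γ * M x x ≤ γ := mul_le_of_le_one_right hγ0 (le_one_of_mem_rowStochastic hM)
  have hdiag : ‖(1 - γ • M) x x‖ = 1 - γ * M x x := by
    simp [abs_of_nonneg (by linarith : 0 ≤ 1 - γ * M x x)]
  rw [sum_congr rfl hoff, ← mul_sum, sum_erase_eq_sub (mem_univ x),
    sum_row_of_mem_rowStochastic hM, hdiag]
  linarith

lemma polMat_mem_rowStochastic {S A : Type*} [Fintype S] [DecidableEq S] {P : S → A → S → ℝ}
    (hP0 : ∀ x a y, 0 ≤ P x a y) (hP1 : ∀ x a, ∑ y, P x a y = 1) (μ : S → A) :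
    polMat P μ ∈ rowStochastic ℝ S :=
  mem_rowStochastic_iff_sum.2 ⟨fun x y => hP0 x (μ x) y, fun x => hP1 x (μ x)⟩

lemma polVal_eq_add_smul_mulVec {S A : Type*} [Fintype S] [DecidableEq S] {P : S → A → S → ℝ}
    (hP0 : ∀ x a y, 0 ≤ P x a y) (hP1 : ∀ x a, ∑ y, P x a y = 1) {γ : ℝ} (hγ0 : 0 ≤ γ)
    (hγ1 : γ < 1) (r : S → A → ℝ) (μ : S → A) :
    polVal γ r P μ = (fun x => r x (μ x)) + γ • (polMat P μ *ᵥ polVal γ r P μ) := by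
  have hunit := isUnit_det_one_sub_smul_of_mem_rowStochastic (polMat_mem_rowStochastic hP0 hP1 μ)
    hγ0 hγ1
  have h : (1 - γ • polMat P μ) *ᵥ polVal γ r P μ = fun x => r x (μ x) := by
    rw [polVal, mulVec_mulVec, mul_nonsing_inv _ hunit, one_mulVec]
  rw [← h, sub_mulVec, one_mulVec, smul_mulVec]
  abel

lemma norm_polVal_sub_polVal_le {S A : Type*} [Fintype S] [DecidableEq S] {P Q : S → A → S → ℝ}
    (hP0 : ∀ x a y, 0 ≤ P x a y) (hP1 : ∀ x a, ∑ y, P x a y = 1)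
    (hQ0 : ∀ x a y, 0 ≤ Q x a y) (hQ1 : ∀ x a, ∑ y, Q x a y = 1)
    {γ : ℝ} (hγ0 : 0 ≤ γ) (hγ1 : γ < 1) (r : S → A → ℝ) {g : S → ℝ}
    (hg : ∀ x a, P x a ⬝ᵥ g = Q x a ⬝ᵥ g) {τ : ℝ} (hτ : 0 ≤ τ)
    (hTV : ∀ x a, ∑ y, |P x a y - Q x a y| ≤ τ) (μ : S → A) :
    ‖polVal γ r P μ - polVal γ r Q μ‖ ≤ γ * τ / (1 - γ) * ‖polVal γ r P μ - g‖ := by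
  set V := polVal γ r P μ
  set W := polVal γ r Q μ
  set M := polMat P μ
  set N := polMat Q μ
  have hgM : M *ᵥ g = N *ᵥ g := funext fun x => hg x (μ x)
  have hdiff : V - W = γ • ((M - N) *ᵥ (V - g) + N *ᵥ (V - W)) := by
    have hV : V = (fun x => r x (μ x)) + γ • (M *ᵥ V) :=
      polVal_eq_add_smul_mulVec hP0 hP1 hγ0 hγ1 r μ
    have hW : W = (fun x => r x (μ x)) + γ • (N *ᵥ W) :=
      polVal_eq_add_smul_mulVec hQ0 hQ1 hγ0 hγ1 r μ
    rw [sub_mulVec, mulVec_sub, mulVec_sub, mulVec_sub, hgM]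
    conv_lhs => rw [hV, hW]
    module
  have hMN : ∀ x, ∑ y, |(M - N) x y| ≤ τ := fun x => hTV x (μ x)
  have hrec : ‖V - W‖ ≤ γ * (τ * ‖V - g‖ + ‖V - W‖) := by
    conv_lhs => rw [hdiff, norm_smul, Real.norm_of_nonneg hγ0]
    refine mul_le_mul_of_nonneg_left ((norm_add_le _ _).trans (add_le_add ?_ ?_)) hγ0
    · exact norm_mulVec_le hτ hMN _
    · exact norm_mulVec_le_of_mem_rowStochastic (polMat_mem_rowStochastic hQ0 hQ1 μ) _
  rw [div_mul_eq_mul_div, le_div_iff₀ (sub_pos.2 hγ1)]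
  linarith

lemma norm_sub_le_of_norm_sub_le_mul {S : Type*} [Fintype S] {V₁ V₂ W₁ W₂ g : S → ℝ} {κ : ℝ}
    (hκ0 : 0 ≤ κ) (hκ1 : κ < 1) (hV : V₂ ≤ V₁) (hW : W₁ ≤ W₂)
    (h₁ : ‖V₁ - W₁‖ ≤ κ * ‖V₁ - g‖) (h₂ : ‖V₂ - W₂‖ ≤ κ * ‖V₂ - g‖) :
    ‖V₁ - V₂‖ ≤ 2 * κ / (1 - κ) * ‖V₁ - g‖ := by
  have hsandwich : ‖V₁ - V₂‖ ≤ ‖V₁ - W₁‖ + ‖V₂ - W₂‖ := by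
    refine (pi_norm_le_iff_of_nonneg (by positivity)).2 fun x => ?_
    have h₁x := norm_le_pi_norm (V₁ - W₁) x
    have h₂x := norm_le_pi_norm (V₂ - W₂) x
    simp only [Pi.sub_apply, Real.norm_eq_abs] at h₁x h₂x ⊢
    rw [abs_of_nonneg (sub_nonneg.2 (hV x))]
    linarith [le_abs_self (V₁ x - W₁ x), neg_abs_le (V₂ x - W₂ x), hW x]
  have htri : ‖V₂ - g‖ ≤ ‖V₁ - V₂‖ + ‖V₁ - g‖ := by
    rw [norm_sub_rev V₁ V₂]
    exact norm_sub_le_norm_sub_add_norm_sub V₂ V₁ g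
  rw [div_mul_eq_mul_div, le_div_iff₀ (sub_pos.2 hκ1)]
  nlinarith [mul_le_mul_of_nonneg_left htri hκ0]

theorem stmt5_general {S A : Type*} [Fintype S] [DecidableEq S] [Fintype A]
    (P Phat Pbar : S → A → S → ℝ)
    (hP0 : ∀ x a y, 0 ≤ P x a y) (hP1 : ∀ x a, ∑ y, P x a y = 1)
    (hPbar0 : ∀ x a y, 0 ≤ Pbar x a y) (hPbar1 : ∀ x a, ∑ y, Pbar x a y = 1)
    (hsuppbar : ∀ x a y, Pbar x a y = 0 → P x a y = 0)
    (r : S → A → ℝ) (γ : ℝ) (hγ0 : 0 ≤ γ) (hγ1 : γ < 1)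
    (d : ℕ) (φ : Fin d → S → ℝ)
    (hmatch : ∀ x a, ∀ i : Fin d, ∑ y, Pbar x a y * φ i y = ∑ y, P x a y * φ i y)
    (hKLle : ∀ x a, KLfin (P x a) (Pbar x a) ≤ KLfin (P x a) (Phat x a))
    (ε c₁ : ℝ)
    (hε : ε = ⨆ x, ⨆ a, Real.sqrt (KLfin (P x a) (Phat x a)))
    (hc₁ : c₁ = γ * Real.sqrt 2 / (1 - γ))
    (hsmall : c₁ * ε < 1)
    (πstar πbar : S → A)
    (hopt : ∀ μ : S → A, ∀ x, polVal γ r P μ x ≤ polVal γ r P πstar x)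
    (hoptbar : ∀ μ : S → A, ∀ x, polVal γ r Pbar μ x ≤ polVal γ r Pbar πbar x) :
    ∀ w : Fin d → ℝ,
      supNorm (fun x => polVal γ r P πstar x - polVal γ r P πbar x) ≤
        (2 * c₁ * ε / (1 - c₁ * ε)) *
          supNorm (fun x => polVal γ r P πstar x - ∑ i, w i * φ i x) := by
  intro w
  have hε0 : 0 ≤ ε := hε ▸ Real.iSup_nonneg fun x => Real.iSup_nonneg fun a => sqrt_nonneg _
  have hKL_le : ∀ x a, √(KLfin (P x a) (Phat x a)) ≤ ε := fun x a => hε ▸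
    (le_ciSup (f := fun a => √(KLfin (P x a) (Phat x a))) (Set.finite_range _).bddAbove a).trans
      (le_ciSup (f := fun x => ⨆ a, √(KLfin (P x a) (Phat x a))) (Set.finite_range _).bddAbove x)
  have hTV : ∀ x a, ∑ y, |P x a y - Pbar x a y| ≤ √2 * ε := fun x a => calc
    ∑ y, |P x a y - Pbar x a y| ≤ √(2 * KLfin (P x a) (Pbar x a)) :=
        sum_abs_sub_le_sqrt_two_mul_KLfin (hP0 x a) (hPbar0 x a) (hP1 x a) (hPbar1 x a)
          (hsuppbar x a)
    _ ≤ √2 * √(KLfin (P x a) (Phat x a)) := by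
        rw [← sqrt_mul zero_le_two]; gcongr; exact hKLle x a
    _ ≤ √2 * ε := by gcongr; exact hKL_le x a
  have hcomb : ∀ p : S → ℝ, p ⬝ᵥ (fun y => ∑ i, w i * φ i y) = ∑ i, w i * ∑ y, p y * φ i y :=
    fun p => by simp only [dotProduct, mul_sum, mul_left_comm (p _)]; exact sum_comm
  have hg : ∀ x a, P x a ⬝ᵥ (fun y => ∑ i, w i * φ i y) = Pbar x a ⬝ᵥ fun y => ∑ i, w i * φ i y :=
    fun x a => by simp only [hcomb, hmatch x a]
  have hκ : γ * (√2 * ε) / (1 - γ) = c₁ * ε := by rw [hc₁]; ring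
  have hsim :=
    hκ ▸ norm_polVal_sub_polVal_le hP0 hP1 hPbar0 hPbar1 hγ0 hγ1 r hg (by positivity) hTV
  rw [supNorm_eq_norm, supNorm_eq_norm, mul_assoc 2]
  exact norm_sub_le_of_norm_sub_le_mul (by rw [hc₁]; have := sub_pos.2 hγ1; positivity) hsmall
    (hopt πbar) (hoptbar πstar) (hsim πstar) (hsim πbar)

theorem stmt5 {S A : Type*} [Fintype S] [Nonempty S] [DecidableEq S] [Fintype A] [Nonempty A]
    (P Phat Pbar : S → A → S → ℝ)
    (hP0 : ∀ x a y, 0 ≤ P x a y) (hP1 : ∀ x a, ∑ y, P x a y = 1)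
    (hPhat0 : ∀ x a y, 0 ≤ Phat x a y) (hPhat1 : ∀ x a, ∑ y, Phat x a y = 1)
    (hPbar0 : ∀ x a y, 0 ≤ Pbar x a y) (hPbar1 : ∀ x a, ∑ y, Pbar x a y = 1)
    (hsupphat : ∀ x a y, Phat x a y = 0 → P x a y = 0)
    (hsuppbar : ∀ x a y, Pbar x a y = 0 → P x a y = 0)
    (r : S → A → ℝ) (γ : ℝ) (hγ0 : 0 ≤ γ) (hγ1 : γ < 1)
    (d : ℕ) (φ : Fin d → S → ℝ)
    (hmatch : ∀ x a, ∀ i : Fin d, ∑ y, Pbar x a y * φ i y = ∑ y, P x a y * φ i y)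
    (hKLle : ∀ x a, KLfin (P x a) (Pbar x a) ≤ KLfin (P x a) (Phat x a))
    (ε c₁ : ℝ)
    (hε : ε = ⨆ x, ⨆ a, Real.sqrt (KLfin (P x a) (Phat x a)))
    (hc₁ : c₁ = γ * Real.sqrt 2 / (1 - γ))
    (hsmall : c₁ * ε < 1)
    (πstar πbar : S → A)
    (hopt : ∀ μ : S → A, ∀ x, polVal γ r P μ x ≤ polVal γ r P πstar x)
    (hoptbar : ∀ μ : S → A, ∀ x, polVal γ r Pbar μ x ≤ polVal γ r Pbar πbar x) :
    ∀ w : Fin d → ℝ,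
      supNorm (fun x => polVal γ r P πstar x - polVal γ r P πbar x) ≤
        (2 * c₁ * ε / (1 - c₁ * ε)) *
          supNorm (fun x => polVal γ r P πstar x - ∑ i, w i * φ i x) :=
  stmt5_general P Phat Pbar hP0 hP1 hPbar0 hPbar1 hsuppbar r γ hγ0 hγ1 d φ hmatch hKLle ε c₁ hε hc₁
    hsmall πstar πbar hopt hoptbar
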